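/- Suppose (x*, u*) is a local minimizer of the continuous optimal control problem (P) with costate λ*, assumptions (A2)–(A3) hold, and the Radau quadrature rule of order N satisfies (P1). Then the linear map ∇T* is invertible. -/

import Mathlib

open Polynomial Matrix Set

noncomputable section

/-- Euclidean norm of a finite real vector. -/
def enorm' {k : ℕ} (v : Fin k → ℝ) : ℝ := Real.sqrt (∑ i, (v i) ^ 2)

/-- Gradient of a scalar function on `ℝ^k` (vector of partial derivatives). -/
def pgrad {k : ℕ} (g : (Fin k → ℝ) → ℝ) (x : Fin k → ℝ) : Fin k → ℝ :=
  fun i => fderiv ℝ g x (Pi.single i 1)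

/-- The Hamiltonian `H(x,u,λ) = λᵀ f(x,u)`. -/
def ham {n m : ℕ} (f : (Fin n → ℝ) → (Fin m → ℝ) → Fin n → ℝ)
    (x : Fin n → ℝ) (u : Fin m → ℝ) (lam : Fin n → ℝ) : ℝ :=
  ∑ l, lam l * f x u l

/-- `∇_x H`. -/
def gradxH {n m : ℕ} (f : (Fin n → ℝ) → (Fin m → ℝ) → Fin n → ℝ)
    (x : Fin n → ℝ) (u : Fin m → ℝ) (lam : Fin n → ℝ) : Fin n → ℝ :=
  pgrad (fun x' => ham f x' u lam) x

/-- `∇_u H`. -/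
def graduH {n m : ℕ} (f : (Fin n → ℝ) → (Fin m → ℝ) → Fin n → ℝ)
    (x : Fin n → ℝ) (u : Fin m → ℝ) (lam : Fin n → ℝ) : Fin m → ℝ :=
  pgrad (fun u' => ham f x u' lam) u

/-- Jacobian `∇_x f` (an `n×n` matrix whose `k`-th row is `(∇_x f_k)ᵀ`). -/
def jacX {n m : ℕ} (f : (Fin n → ℝ) → (Fin m → ℝ) → Fin n → ℝ)
    (x : Fin n → ℝ) (u : Fin m → ℝ) : Matrix (Fin n) (Fin n) ℝ :=
  fun k l => fderiv ℝ (fun x' => f x' u k) x (Pi.single l 1)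

/-- Jacobian `∇_u f`. -/
def jacU {n m : ℕ} (f : (Fin n → ℝ) → (Fin m → ℝ) → Fin n → ℝ)
    (x : Fin n → ℝ) (u : Fin m → ℝ) : Matrix (Fin n) (Fin m) ℝ :=
  fun k l => fderiv ℝ (fun u' => f x u' k) u (Pi.single l 1)

/-- Hessian `∇_{xx} H`. -/
def hessXX {n m : ℕ} (f : (Fin n → ℝ) → (Fin m → ℝ) → Fin n → ℝ)
    (x : Fin n → ℝ) (u : Fin m → ℝ) (lam : Fin n → ℝ) : Matrix (Fin n) (Fin n) ℝ :=
  fun k l => fderiv ℝ (fun x' => gradxH f x' u lam l) x (Pi.single k 1)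

/-- Hessian `∇_{xu} H` (`n×m`). -/
def hessXU {n m : ℕ} (f : (Fin n → ℝ) → (Fin m → ℝ) → Fin n → ℝ)
    (x : Fin n → ℝ) (u : Fin m → ℝ) (lam : Fin n → ℝ) : Matrix (Fin n) (Fin m) ℝ :=
  fun k l => fderiv ℝ (fun u' => gradxH f x u' lam k) u (Pi.single l 1)

/-- Hessian `∇_{uu} H`. -/
def hessUU {n m : ℕ} (f : (Fin n → ℝ) → (Fin m → ℝ) → Fin n → ℝ)
    (x : Fin n → ℝ) (u : Fin m → ℝ) (lam : Fin n → ℝ) : Matrix (Fin m) (Fin m) ℝ :=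
  fun k l => fderiv ℝ (fun u' => graduH f x u' lam k) u (Pi.single l 1)

/-- Hessian `∇² C`. -/
def hessC {n : ℕ} (C : (Fin n → ℝ) → ℝ) (x : Fin n → ℝ) : Matrix (Fin n) (Fin n) ℝ :=
  fun k l => fderiv ℝ (fun x' => pgrad C x' l) x (Pi.single k 1)

/-- The differentiation matrix for nodes `σ 0, …, σ N`: `D i j = L̇_j(σ (i+1))`. -/
def diffMat (N : ℕ) (σ : Fin (N + 1) → ℝ) : Matrix (Fin N) (Fin (N + 1)) ℝ :=
  fun i j => (derivative (Lagrange.basis Finset.univ σ j)).eval (σ i.succ)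

/-- The square submatrix of `D` formed by columns `1` through `N`. -/
def diffMat1N (N : ℕ) (σ : Fin (N + 1) → ℝ) : Matrix (Fin N) (Fin N) ℝ :=
  fun i j => diffMat N σ i j.succ

/-- The matrix `D‡` with entries `D‡_{ij} = -(ω_j/ω_i) D_{ji}`. -/
def ddagMat (N : ℕ) (σ : Fin (N + 1) → ℝ) (ω : Fin N → ℝ) :
    Matrix (Fin N) (Fin N) ℝ :=
  fun i j => -(ω j / ω i) * diffMat N σ j i.succ

/-- `(τ; ω)` is a Radau quadrature rule of order `N`: nodes
`-1 < τ_1 < … < τ_N = 1`, positive weights, and the quadrature is exact for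
polynomials of degree at most `2N-2`. -/
def IsRadauRule (N : ℕ) (τ ω : Fin N → ℝ) : Prop :=
  StrictMono τ ∧ (∀ i, -1 < τ i) ∧ (∀ i, τ i ≤ 1) ∧ (∃ i, τ i = 1) ∧
  (∀ i, 0 < ω i) ∧
  ∀ q : Polynomial ℝ, q.degree ≤ (2 * N - 2 : ℕ) →
    ∫ t in (-1:ℝ)..1, q.eval t = ∑ i, ω i * q.eval (τ i)

/-- The linearized KKT map `∇T*` of the Radau discretization, linearized at
`(x*, u*, λ*)` evaluated along the collocation points. -/
def gradTstar (n m N : ℕ) (hN : 0 < N)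
    (f : (Fin n → ℝ) → (Fin m → ℝ) → Fin n → ℝ) (C : (Fin n → ℝ) → ℝ)
    (xs : ℝ → Fin n → ℝ) (us : ℝ → Fin m → ℝ) (lams : ℝ → Fin n → ℝ)
    (τ ω : Fin N → ℝ) :
    ((Fin (N + 1) → Fin n → ℝ) × (Fin N → Fin m → ℝ) × (Fin (N + 1) → Fin n → ℝ)) →
    ((Fin N → Fin n → ℝ) × (Fin n → ℝ) × (Fin n → ℝ) ×
      (Fin (N - 1) → Fin n → ℝ) × (Fin n → ℝ) × (Fin N → Fin m → ℝ)) :=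
  fun XUL =>
    let X := XUL.1; let U := XUL.2.1; let Λ := XUL.2.2
    let σ : Fin (N + 1) → ℝ := Fin.cons (-1) τ
    let A : Fin N → Matrix (Fin n) (Fin n) ℝ := fun i => jacX f (xs (τ i)) (us (τ i))
    let B : Fin N → Matrix (Fin n) (Fin m) ℝ := fun i => jacU f (xs (τ i)) (us (τ i))
    let Q : Fin N → Matrix (Fin n) (Fin n) ℝ :=
      fun i => hessXX f (xs (τ i)) (us (τ i)) (lams (τ i))
    let S : Fin N → Matrix (Fin n) (Fin m) ℝ :=
      fun i => hessXU f (xs (τ i)) (us (τ i)) (lams (τ i))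
    let R : Fin N → Matrix (Fin m) (Fin m) ℝ :=
      fun i => hessUU f (xs (τ i)) (us (τ i)) (lams (τ i))
    let T : Matrix (Fin n) (Fin n) ℝ := hessC C (xs 1)
    let lastN : Fin N := ⟨N - 1, Nat.sub_lt hN one_pos⟩
    ( -- (1)
      fun i => (∑ j, diffMat N σ i j • X j) - (A i).mulVec (X i.succ)
        - (B i).mulVec (U i),
      -- (2)
      X 0,
      -- (3)
      Λ 0 - T.mulVec (X (Fin.last N)) -
        ∑ i : Fin N, ω i •
          ((A i)ᵀ.mulVec (Λ i.succ) + (Q i).mulVec (X i.succ) + (S i).mulVec (U i)),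
      -- (4)
      fun i : Fin (N - 1) =>
        let i' : Fin N := Fin.castLE (Nat.sub_le N 1) i
        (∑ j, ddagMat N σ ω i' j • Λ j.succ) + (A i')ᵀ.mulVec (Λ i'.succ)
          + (Q i').mulVec (X i'.succ) + (S i').mulVec (U i'),
      -- (5)
      (∑ j, ddagMat N σ ω lastN j • Λ j.succ) + (A lastN)ᵀ.mulVec (Λ lastN.succ)
        + (Q lastN).mulVec (X lastN.succ) + (S lastN).mulVec (U lastN)
        + (1 / ω lastN) • T.mulVec (X (Fin.last N)),
      -- (6)
      fun i => (S i)ᵀ.mulVec (X i.succ) + (R i).mulVec (U i)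
        + (B i)ᵀ.mulVec (Λ i.succ) )

/-!
`∇T*` is linear between spaces of the same dimension, so it suffices that its kernel is
trivial. Take `(X, U, Λ)` in the kernel and scale the costate by the quadrature weights,
`μⱼ = ωⱼ Λⱼ`: since `D‡` is the `ω`-weighted adjoint of `-D₁:N`, the costate rows become
`D₁:Nᵀ μ = Aᵢᵀ μᵢ + ωᵢ (Qᵢ Xᵢ + Sᵢ Uᵢ) + [i = N] T X_N`. Pairing the state equations with `μ`
and the costate equations with `X`, the `A`-terms cancel and the control equations turn the
rest into `∑ ωᵢ (Xᵢ, Uᵢ)ᵀ ∇²H (Xᵢ, Uᵢ) + X_Nᵀ T X_N = 0`, so `X = U = 0` by (A2). Then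
`μ = (D₁:N⁻¹)ᵀ (Aᵢᵀ μᵢ)ᵢ`, and in the entrywise `ℓ¹` norm the right side is at most
`‖D₁:N⁻¹‖∞ ‖Aᵢ‖∞ ≤ 2 · 1/4` times the left by (P1) and (A3), so `μ = 0`; row (3) then gives
`Λ₀ = 0`.
-/

open Finset

section MatrixLemmas

variable {ι a b : Type*} [Fintype ι] [Fintype a] [Fintype b]

theorem sum_abs_vecMul_le {M : Matrix ι a ℝ} {c : ℝ} (hM : ∀ i, ∑ j, |M i j| ≤ c)
    (v : ι → ℝ) : ∑ j, |(v ᵥ* M) j| ≤ c * ∑ i, |v i| :=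
  calc ∑ j, |(v ᵥ* M) j| ≤ ∑ j : a, ∑ i : ι, |v i| * |M i j| := by
        gcongr with j
        simpa only [vecMul, dotProduct, abs_mul] using
          abs_sum_le_sum_abs (fun i => v i * M i j) univ
    _ = ∑ i, |v i| * ∑ j, |M i j| := by simp only [mul_sum]; exact Finset.sum_comm
    _ ≤ ∑ i, |v i| * c := by gcongr with i; exact hM i
    _ = c * ∑ i, |v i| := by rw [← sum_mul, mul_comm]

theorem eq_zero_of_sum_transpose_smul_eq [DecidableEq ι] {E : Matrix ι ι ℝ} (hE : IsUnit E)
    {c d : ℝ} (hEinv : ∀ i, ∑ j, |E⁻¹ i j| ≤ c) {A : ι → Matrix a a ℝ}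
    (hA : ∀ i k, ∑ l, |A i k l| ≤ d) (hcd : c * d < 1) {μ : ι → a → ℝ}
    (hμ : ∀ i, ∑ j, E j i • μ j = (A i)ᵀ *ᵥ μ i) : μ = 0 := by
  set G : Matrix ι a ℝ := of fun i => (A i)ᵀ *ᵥ μ i
  have hμG : of μ = (Gᵀ * E⁻¹)ᵀ := by
    have hEμ : Eᵀ * of μ = G := funext fun i => by
      rw [mul_apply_eq_vecMul, vecMul_eq_sum]
      exact hμ i
    have hdet : IsUnit Eᵀ.det := by rw [det_transpose]; exact (isUnit_iff_isUnit_det E).mp hE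
    rw [transpose_mul, transpose_transpose, ← hEμ, transpose_nonsing_inv]
    exact (nonsing_inv_mul_cancel_left Eᵀ (of μ) hdet).symm
  have hμle : ∑ i, ∑ k, |μ i k| ≤ c * ∑ i, ∑ k, |G i k| :=
    calc ∑ i, ∑ k, |μ i k| = ∑ k, ∑ j, |((fun i => G i k) ᵥ* E⁻¹) j| := by
          rw [Finset.sum_comm]
          exact sum_congr rfl fun k _ => sum_congr rfl fun j _ => by
            rw [show μ j k = of μ j k from rfl, hμG]
            rfl
      _ ≤ ∑ k, c * ∑ i, |G i k| := sum_le_sum fun k _ => sum_abs_vecMul_le hEinv _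
      _ = c * ∑ i, ∑ k, |G i k| := by rw [← mul_sum, Finset.sum_comm]
  have hGle : ∑ i, ∑ k, |G i k| ≤ d * ∑ i, ∑ k, |μ i k| := by
    rw [mul_sum]
    exact sum_le_sum fun i _ => by
      simpa only [G, of_apply, mulVec_transpose] using sum_abs_vecMul_le (hA i) (μ i)
  have hnorm : ∑ i, ∑ k, |μ i k| = 0 := by
    have h0 : 0 ≤ ∑ i, ∑ k, |μ i k| := by positivity
    have hG0 : 0 ≤ ∑ i, ∑ k, |G i k| := by positivity
    rcases le_or_gt c 0 with hc | hc
    · nlinarith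
    · nlinarith [mul_le_mul_of_nonneg_left hGle hc.le]
  ext i k
  simpa using (sum_eq_zero_iff_of_nonneg fun _ _ => by positivity).1
    ((sum_eq_zero_iff_of_nonneg fun _ _ => by positivity).1 hnorm i (mem_univ i)) k (mem_univ k)

theorem sum_dotProduct_sum_smul_comm (E : Matrix ι ι ℝ) (V W : ι → a → ℝ) :
    ∑ i, V i ⬝ᵥ ∑ j, E i j • W j = ∑ i, (∑ j, E j i • V j) ⬝ᵥ W i := by
  simp only [dotProduct_sum, sum_dotProduct, dotProduct_smul, smul_dotProduct]
  exact Finset.sum_comm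

def blockQuadForm (Q : Matrix a a ℝ) (S : Matrix a b ℝ) (R : Matrix b b ℝ) (v : a → ℝ)
    (w : b → ℝ) : ℝ :=
  v ⬝ᵥ Q *ᵥ v + 2 * (v ⬝ᵥ S *ᵥ w) + w ⬝ᵥ R *ᵥ w

theorem blockQuadForm_nonneg {Q : Matrix a a ℝ} {S : Matrix a b ℝ} {R : Matrix b b ℝ}
    (hH : ∀ v w, (v, w) ≠ 0 → 0 < blockQuadForm Q S R v w) (v : a → ℝ) (w : b → ℝ) :
    0 ≤ blockQuadForm Q S R v w := by
  by_cases h : (v, w) = 0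
  · simp only [Prod.mk_eq_zero] at h
    simp [blockQuadForm, h.1, h.2]
  · exact (hH v w h).le

theorem energy_identity {E : Matrix ι ι ℝ} {ω : ι → ℝ} {A Q : ι → Matrix a a ℝ}
    {B S : ι → Matrix a b ℝ} {R : ι → Matrix b b ℝ} {X μ P : ι → a → ℝ} {U : ι → b → ℝ}
    (hX : ∀ i, ∑ j, E i j • X j = A i *ᵥ X i + B i *ᵥ U i)
    (hμ : ∀ i, ∑ j, E j i • μ j = (A i)ᵀ *ᵥ μ i + ω i • (Q i *ᵥ X i + S i *ᵥ U i) + P i)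
    (hU : ∀ i, ω i • ((S i)ᵀ *ᵥ X i + R i *ᵥ U i) + (B i)ᵀ *ᵥ μ i = 0) :
    ∑ i, ω i * blockQuadForm (Q i) (S i) (R i) (X i) (U i) + ∑ i, X i ⬝ᵥ P i = 0 := by
  have hrow (i : ι) : μ i ⬝ᵥ (∑ j, E i j • X j) - (∑ j, E j i • μ j) ⬝ᵥ X i =
      -(ω i * blockQuadForm (Q i) (S i) (R i) (X i) (U i) + X i ⬝ᵥ P i) := by
    have hBμ : (B i)ᵀ *ᵥ μ i = -(ω i • ((S i)ᵀ *ᵥ X i + R i *ᵥ U i)) :=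
      eq_neg_of_add_eq_zero_right (hU i)
    have hμB : μ i ⬝ᵥ B i *ᵥ U i = (B i)ᵀ *ᵥ μ i ⬝ᵥ U i := by
      rw [dotProduct_mulVec, mulVec_transpose]
    rw [hX, hμ, dotProduct_add, hμB, hBμ, dotProduct_mulVec, ← mulVec_transpose]
    simp only [add_dotProduct, neg_dotProduct, smul_dotProduct, smul_eq_mul, mulVec_transpose,
      ← dotProduct_mulVec, blockQuadForm]
    rw [dotProduct_comm (Q i *ᵥ X i), dotProduct_comm (S i *ᵥ U i),
      dotProduct_comm (R i *ᵥ U i), dotProduct_comm (P i)]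
    ring
  have h := sum_dotProduct_sum_smul_comm E μ X
  rw [← sub_eq_zero, ← sum_sub_distrib, sum_congr rfl fun i _ => hrow i, sum_neg_distrib,
    neg_eq_zero, sum_add_distrib] at h
  exact h

theorem state_control_eq_zero_of_blockQuadForm_pos {E : Matrix ι ι ℝ} {ω : ι → ℝ}
    (hω : ∀ i, 0 < ω i) {A Q : ι → Matrix a a ℝ} {B S : ι → Matrix a b ℝ}
    {R : ι → Matrix b b ℝ} (hH : ∀ i v w, (v, w) ≠ 0 → 0 < blockQuadForm (Q i) (S i) (R i) v w)
    {X μ P : ι → a → ℝ} {U : ι → b → ℝ} (hP : 0 ≤ ∑ i, X i ⬝ᵥ P i)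
    (hX : ∀ i, ∑ j, E i j • X j = A i *ᵥ X i + B i *ᵥ U i)
    (hμ : ∀ i, ∑ j, E j i • μ j = (A i)ᵀ *ᵥ μ i + ω i • (Q i *ᵥ X i + S i *ᵥ U i) + P i)
    (hU : ∀ i, ω i • ((S i)ᵀ *ᵥ X i + R i *ᵥ U i) + (B i)ᵀ *ᵥ μ i = 0) :
    X = 0 ∧ U = 0 := by
  have hterm (i : ι) : 0 ≤ ω i * blockQuadForm (Q i) (S i) (R i) (X i) (U i) :=
    mul_nonneg (hω i).le (blockQuadForm_nonneg (hH i) _ _)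
  have hsum : ∑ i, ω i * blockQuadForm (Q i) (S i) (R i) (X i) (U i) = 0 :=
    le_antisymm (by linarith [energy_identity hX hμ hU]) (sum_nonneg fun i _ => hterm i)
  have hrow (i : ι) : (X i, U i) = 0 := by
    by_contra hne
    have := (sum_eq_zero_iff_of_nonneg fun i _ => hterm i).1 hsum i (mem_univ i)
    exact (mul_pos (hω i) (hH i _ _ hne)).ne' this
  exact ⟨funext fun i => (Prod.mk_eq_zero.1 (hrow i)).1,
    funext fun i => (Prod.mk_eq_zero.1 (hrow i)).2⟩

theorem sum_sum_mul_mul_eq_dotProduct_mulVec (v : a → ℝ) (M : Matrix a b ℝ) (w : b → ℝ) :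
    ∑ k, ∑ l, v k * M k l * w l = v ⬝ᵥ M *ᵥ w := by
  simp only [dotProduct, mulVec, mul_sum, mul_assoc]

theorem dotProduct_mulVec_nonneg_of_coercive {M : Matrix a a ℝ} {α : ℝ} (hα : 0 ≤ α)
    (hM : ∀ v : a → ℝ, v ≠ 0 → α * ∑ k, v k ^ 2 < ∑ k, ∑ l, v k * M k l * v l) (v : a → ℝ) :
    0 ≤ v ⬝ᵥ M *ᵥ v := by
  rcases eq_or_ne v 0 with rfl | hv
  · simp
  · rw [← sum_sum_mul_mul_eq_dotProduct_mulVec]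
    exact (by positivity : 0 ≤ α * ∑ k, v k ^ 2).trans (hM v hv).le

theorem blockQuadForm_pos_of_coercive {Q : Matrix a a ℝ} {S : Matrix a b ℝ} {R : Matrix b b ℝ}
    {α : ℝ} (hα : 0 ≤ α) {v : a → ℝ} {w : b → ℝ}
    (h : α * ((∑ k, v k ^ 2) + ∑ l, w l ^ 2) <
      (∑ k, ∑ l, v k * Q k l * v l) + 2 * (∑ k, ∑ l, v k * S k l * w l) +
        ∑ k, ∑ l, w k * R k l * w l) :
    0 < blockQuadForm Q S R v w := by
  simp only [sum_sum_mul_mul_eq_dotProduct_mulVec] at h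
  exact (by positivity : 0 ≤ α * ((∑ k, v k ^ 2) + ∑ l, w l ^ 2)).trans_lt h

end MatrixLemmas

theorem smul_sum_ddagMat_smul {V : Type*} [AddCommGroup V] [Module ℝ V] {N : ℕ}
    {σ : Fin (N + 1) → ℝ} {ω : Fin N → ℝ} {i : Fin N} (hi : ω i ≠ 0) (v : Fin N → V) :
    ω i • ∑ j, ddagMat N σ ω i j • v j = -∑ j, diffMat1N N σ j i • ω j • v j := by
  rw [smul_sum, ← sum_neg_distrib]
  refine sum_congr rfl fun j _ => ?_
  rw [smul_smul, smul_smul, ← neg_smul, ddagMat, diffMat1N]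
  congr 1
  field_simp

def gradTstarₗ (n m N : ℕ) (hN : 0 < N)
    (f : (Fin n → ℝ) → (Fin m → ℝ) → Fin n → ℝ) (C : (Fin n → ℝ) → ℝ)
    (xs : ℝ → Fin n → ℝ) (us : ℝ → Fin m → ℝ) (lams : ℝ → Fin n → ℝ)
    (τ ω : Fin N → ℝ) :
    ((Fin (N + 1) → Fin n → ℝ) × (Fin N → Fin m → ℝ) × (Fin (N + 1) → Fin n → ℝ)) →ₗ[ℝ]
    ((Fin N → Fin n → ℝ) × (Fin n → ℝ) × (Fin n → ℝ) ×
      (Fin (N - 1) → Fin n → ℝ) × (Fin n → ℝ) × (Fin N → Fin m → ℝ)) where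
  toFun := gradTstar n m N hN f C xs us lams τ ω
  map_add' _ _ := by
    simp only [gradTstar, Prod.fst_add, Prod.snd_add, Prod.mk_add_mk, Prod.mk.injEq]
    refine ⟨funext fun _ => ?_, ?_, ?_, funext fun _ => ?_, ?_, funext fun _ => ?_⟩ <;>
      simp only [Pi.add_apply, mulVec_add, smul_add, sum_add_distrib] <;> abel
  map_smul' _ _ := by
    simp only [gradTstar, Prod.smul_fst, Prod.smul_snd, Prod.smul_mk, Prod.mk.injEq, funext_iff,
      Pi.smul_apply, mulVec_smul, smul_sum, smul_add, smul_sub, smul_smul, mul_comm _ (_ : ℝ),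
      RingHom.id_apply, implies_true, and_self]

section KKT

variable {n m N : ℕ} {hN : 0 < N} {f : (Fin n → ℝ) → (Fin m → ℝ) → Fin n → ℝ}
  {C : (Fin n → ℝ) → ℝ} {xs : ℝ → Fin n → ℝ} {us : ℝ → Fin m → ℝ} {lams : ℝ → Fin n → ℝ}
  {τ ω : Fin N → ℝ} {X : Fin (N + 1) → Fin n → ℝ} {U : Fin N → Fin m → ℝ}
  {Λ : Fin (N + 1) → Fin n → ℝ}

theorem state_eq_of_gradTstar_eq_zero
    (hz : gradTstar n m N hN f C xs us lams τ ω (X, U, Λ) = 0) (i : Fin N) :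
    ∑ j, diffMat1N N (Fin.cons (-1) τ) i j • X j.succ =
      jacX f (xs (τ i)) (us (τ i)) *ᵥ X i.succ + jacU f (xs (τ i)) (us (τ i)) *ᵥ U i := by
  simp only [gradTstar, Prod.mk_eq_zero] at hz
  have h := congrFun hz.1 i
  simp only [Pi.zero_apply] at h
  rw [Fin.sum_univ_succ, hz.2.1, smul_zero, zero_add] at h
  simp only [diffMat1N]
  linear_combination (norm := module) h

/-- Rows (4) and (5) scaled by `ωᵢ`; the terminal term `T X_N / ω_N` of row (5) becomes the `if`. -/
theorem costate_eq_of_gradTstar_eq_zero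
    (hz : gradTstar n m N hN f C xs us lams τ ω (X, U, Λ) = 0) (i : Fin N) (hi : ω i ≠ 0) :
    ∑ j, diffMat1N N (Fin.cons (-1) τ) j i • (ω j • Λ j.succ) =
      (jacX f (xs (τ i)) (us (τ i)))ᵀ *ᵥ (ω i • Λ i.succ) +
      ω i • (hessXX f (xs (τ i)) (us (τ i)) (lams (τ i)) *ᵥ X i.succ +
        hessXU f (xs (τ i)) (us (τ i)) (lams (τ i)) *ᵥ U i) +
      (if (i : ℕ) = N - 1 then hessC C (xs 1) *ᵥ X (Fin.last N) else 0) := by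
  simp only [gradTstar, Prod.mk_eq_zero] at hz
  obtain ⟨-, -, -, hinterior, hterminal, -⟩ := hz
  have hrow : ∑ j, ddagMat N (Fin.cons (-1) τ) ω i j • Λ j.succ
      + (jacX f (xs (τ i)) (us (τ i)))ᵀ *ᵥ Λ i.succ
      + hessXX f (xs (τ i)) (us (τ i)) (lams (τ i)) *ᵥ X i.succ
      + hessXU f (xs (τ i)) (us (τ i)) (lams (τ i)) *ᵥ U i
      + (ω i)⁻¹ • (if (i : ℕ) = N - 1 then hessC C (xs 1) *ᵥ X (Fin.last N) else 0) = 0 := by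
    split_ifs with hiN
    · obtain rfl : i = ⟨N - 1, Nat.sub_lt hN one_pos⟩ := Fin.ext hiN
      rw [← one_div]
      exact hterminal
    · rw [smul_zero, add_zero]
      exact congrFun hinterior ⟨i, by omega⟩
  have hddag := smul_sum_ddagMat_smul (σ := Fin.cons (-1) τ) hi fun j => Λ j.succ
  have hinv : ω i • (ω i)⁻¹ • (if (i : ℕ) = N - 1 then hessC C (xs 1) *ᵥ X (Fin.last N) else 0)
      = if (i : ℕ) = N - 1 then hessC C (xs 1) *ᵥ X (Fin.last N) else 0 := by
    rw [smul_smul, mul_inv_cancel₀ hi, one_smul]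
  rw [mulVec_smul]
  linear_combination (norm := module) -(ω i • hrow) + hddag + hinv

theorem control_eq_of_gradTstar_eq_zero
    (hz : gradTstar n m N hN f C xs us lams τ ω (X, U, Λ) = 0) (i : Fin N) :
    ω i • ((hessXU f (xs (τ i)) (us (τ i)) (lams (τ i)))ᵀ *ᵥ X i.succ
      + hessUU f (xs (τ i)) (us (τ i)) (lams (τ i)) *ᵥ U i)
      + (jacU f (xs (τ i)) (us (τ i)))ᵀ *ᵥ (ω i • Λ i.succ) = 0 := by
  simp only [gradTstar, Prod.mk_eq_zero] at hz
  have h := congrFun hz.2.2.2.2.2 i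
  simp only [Pi.zero_apply] at h
  rw [mulVec_smul]
  linear_combination (norm := module) ω i • h

theorem eq_zero_of_gradTstar_eq_zero {c d : ℝ} (hω : ∀ i, 0 < ω i)
    (hT : ∀ v, 0 ≤ v ⬝ᵥ hessC C (xs 1) *ᵥ v)
    (hH : ∀ i v w, (v, w) ≠ 0 → 0 < blockQuadForm
      (hessXX f (xs (τ i)) (us (τ i)) (lams (τ i))) (hessXU f (xs (τ i)) (us (τ i)) (lams (τ i)))
      (hessUU f (xs (τ i)) (us (τ i)) (lams (τ i))) v w)
    (hA : ∀ i k, ∑ l, |jacX f (xs (τ i)) (us (τ i)) k l| ≤ d)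
    (hE : IsUnit (diffMat1N N (Fin.cons (-1) τ)))
    (hEinv : ∀ i, ∑ j, |(diffMat1N N (Fin.cons (-1) τ))⁻¹ i j| ≤ c) (hcd : c * d < 1)
    (hz : gradTstar n m N hN f C xs us lams τ ω (X, U, Λ) = 0) : (X, U, Λ) = 0 := by
  have hX0 : X 0 = 0 := by
    simp only [gradTstar, Prod.mk_eq_zero] at hz
    exact hz.2.1
  have hP : 0 ≤ ∑ i : Fin N, X i.succ ⬝ᵥ
      (if (i : ℕ) = N - 1 then hessC C (xs 1) *ᵥ X (Fin.last N) else 0) := by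
    rw [sum_eq_single_of_mem ⟨N - 1, Nat.sub_lt hN one_pos⟩ (mem_univ _) fun i _ hi => by
      rw [if_neg fun h => hi (Fin.ext h), dotProduct_zero]]
    have hlast : Fin.succ ⟨N - 1, Nat.sub_lt hN one_pos⟩ = Fin.last N :=
      Fin.ext (by simp only [Fin.val_succ, Fin.val_last]; omega)
    rw [if_pos rfl, hlast]
    exact hT _
  obtain ⟨hXs, rfl⟩ := state_control_eq_zero_of_blockQuadForm_pos hω hH hP
    (state_eq_of_gradTstar_eq_zero hz) (costate_eq_of_gradTstar_eq_zero hz · (hω _).ne')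
    (control_eq_of_gradTstar_eq_zero hz)
  obtain rfl : X = 0 := funext fun j => Fin.cases hX0 (congrFun hXs) j
  have hμ : (fun j => ω j • Λ j.succ) = 0 :=
    eq_zero_of_sum_transpose_smul_eq hE hEinv hA hcd fun i => by
      simpa using costate_eq_of_gradTstar_eq_zero hz i (hω i).ne'
  have hΛs (j : Fin N) : Λ j.succ = 0 :=
    (smul_eq_zero.1 (congrFun hμ j)).resolve_left (hω j).ne'
  have hΛ0 : Λ 0 = 0 := by
    simp only [gradTstar, Prod.mk_eq_zero] at hz
    simpa [hΛs] using hz.2.2.1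
  exact Prod.ext rfl (Prod.ext rfl (funext fun j => Fin.cases hΛ0 hΛs j))

end KKT

theorem finrank_gradTstar_domain_eq_codomain {n m N : ℕ} (hN : 0 < N) :
    Module.finrank ℝ
      ((Fin (N + 1) → Fin n → ℝ) × (Fin N → Fin m → ℝ) × (Fin (N + 1) → Fin n → ℝ)) =
    Module.finrank ℝ ((Fin N → Fin n → ℝ) × (Fin n → ℝ) × (Fin n → ℝ) ×
      (Fin (N - 1) → Fin n → ℝ) × (Fin n → ℝ) × (Fin N → Fin m → ℝ)) := by
  obtain ⟨N, rfl⟩ : ∃ k, N = k + 1 := ⟨N - 1, by omega⟩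
  simp only [Module.finrank_prod, Module.finrank_pi_fintype, Module.finrank_self, sum_const,
    card_univ, Fintype.card_fin, smul_eq_mul, mul_one, Nat.add_sub_cancel]
  ring

theorem gradTstar_invertible
    (n m N : ℕ) (hN : 2 ≤ N)
    (f : (Fin n → ℝ) → (Fin m → ℝ) → Fin n → ℝ) (C : (Fin n → ℝ) → ℝ)
    (xs : ℝ → Fin n → ℝ) (us : ℝ → Fin m → ℝ) (lams : ℝ → Fin n → ℝ)
    -- (A2): coercivity
    (α : ℝ) (hα : 0 < α)
    (hA2C : ∀ v : Fin n → ℝ, v ≠ 0 →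
      α * (∑ k, v k ^ 2) < ∑ k, ∑ l, v k * hessC C (xs 1) k l * v l)
    (hA2H : ∀ t ∈ Icc (-1:ℝ) 1, ∀ (v : Fin n → ℝ) (w : Fin m → ℝ), (v, w) ≠ 0 →
      α * ((∑ k, v k ^ 2) + ∑ l, w l ^ 2) <
        (∑ k, ∑ l, v k * hessXX f (xs t) (us t) (lams t) k l * v l) +
        2 * (∑ k, ∑ l, v k * hessXU f (xs t) (us t) (lams t) k l * w l) +
        ∑ k, ∑ l, w k * hessUU f (xs t) (us t) (lams t) k l * w l)
    -- (A3): Jacobian bound in the matrix sup-norm (max absolute row sum)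
    (hA3 : ∀ t ∈ Icc (-1:ℝ) 1,
      (∀ k, ∑ l, |jacX f (xs t) (us t) k l| ≤ 1 / 4) ∧
      (∀ l, ∑ k, |jacX f (xs t) (us t) k l| ≤ 1 / 4))
    -- the Radau quadrature rule of order N and property (P1)
    (τ ω : Fin N → ℝ) (hrad : IsRadauRule N τ ω)
    (hP1 : IsUnit (diffMat1N N (Fin.cons (-1) τ)))
    (hP1norm : ∀ i : Fin N, ∑ j, |(diffMat1N N (Fin.cons (-1) τ))⁻¹ i j| ≤ 2) :
    Function.Bijective (gradTstar n m N (by omega) f C xs us lams τ ω) := by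
  obtain ⟨-, hτlb, hτub, -, hω, -⟩ := hrad
  have hτ (i : Fin N) : τ i ∈ Icc (-1 : ℝ) 1 := ⟨(hτlb i).le, hτub i⟩
  have hinj : Function.Injective (gradTstarₗ n m N (by omega) f C xs us lams τ ω) :=
    (injective_iff_map_eq_zero _).2 fun _ hz => eq_zero_of_gradTstar_eq_zero (hN := by omega) hω
      (dotProduct_mulVec_nonneg_of_coercive hα.le hA2C)
      (fun i v w hvw => blockQuadForm_pos_of_coercive hα.le (hA2H _ (hτ i) v w hvw))
      (fun i => (hA3 _ (hτ i)).1) hP1 hP1norm (by norm_num) hz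
  exact ⟨hinj, (LinearMap.injective_iff_surjective_of_finrank_eq_finrank
    (finrank_gradTstar_domain_eq_codomain (by omega))).1 hinj⟩
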